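/- arXiv:2601.20370 — 4 statements merged into one kernel-verified Lean document; each statement's English description precedes it below -/
import Mathlib

section
/- Let (α, γ) be a Galois insertion between complete lattices D and A, and let B_D be a join basis of D, so that α(B_D) is a basis of A. If X ⊆ A is dense in A with respect to α(B_D), then γ(X) = {γ(a) | a ∈ X} is dense in D with respect to B_D. -/
/-- density in the abstract domain is preserved by concretisation. -/
theorem density_preserved_by_concretization {D A : Type*}
    [CompleteLattice D] [CompleteLattice A]
    (α : D → A) (γ : A → D)
    (hadj : ∀ (h : D) (a : A), α h ≤ a ↔ h ≤ γ a)
    (hins : ∀ a : A, α (γ a) = a)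
    (BD : Set D) (hB : ∀ d : D, d = sSup {b | b ∈ BD ∧ b ≤ d})
    (X : Set A)
    (hdense : ∀ b ∈ α '' BD, b ≤ sSup X → ∃ x ∈ X, b ≤ x) :
    ∀ b ∈ BD, b ≤ sSup (γ '' X) → ∃ d ∈ γ '' X, b ≤ d := by
  intro b hb hle
  have hγmono : ∀ a a' : A, a ≤ a' → γ a ≤ γ a' := by
    intro a a' h
    rw [← hadj]
    exact (hins a).le.trans h
  have h1 : sSup (γ '' X) ≤ γ (sSup X) := by
    apply sSup_le
    rintro d ⟨x, hx, rfl⟩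
    exact hγmono _ _ (le_sSup hx)
  have h2 : α b ≤ sSup X := (hadj _ _).2 (hle.trans h1)
  obtain ⟨x, hx, hbx⟩ := hdense (α b) ⟨b, hb, rfl⟩ h2
  exact ⟨γ x, ⟨x, hx, rfl⟩, (hadj _ _).1 hbx⟩
end

section
/- With the interval abstraction α_I(X) = (⋀X, ⋁α(X)) and concretization γ_I(c,a) = {x | c ≤ x ≤ γ(a)} between 𝒫(C) and C × A, the best correct approximation of the hyper sum satisfies: for any family of intervals (c_j, a_j), α_I(⊕_{j∈J} γ_I(c_j, a_j)) = (⋁_{j∈J} c_j, ⋁_{j∈J} a_j), provided each J is nonempty. -/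
/-- The hyper sum on `Set C`. -/
def hyperSum {C : Type*} [CompleteLattice C] {ι : Type*} (X : ι → Set C) : Set C :=
  {c | ∃ x : ι → C, (∀ i, x i ∈ X i) ∧ c = ⨆ i, x i}

/-- the best correct approximation of the hyper sum on intervals
is the pairwise join. -/
theorem interval_bca_hyperSum {C A : Type*}
    [CompleteLattice C] [CompleteLattice A]
    (α : C → A) (γ : A → C)
    (hadj : ∀ (c : C) (a : A), α c ≤ a ↔ c ≤ γ a)
    (hins : ∀ a : A, α (γ a) = a)
    (hαsup : ∀ S : Set C, α (sSup S) = sSup (α '' S))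
    {J : Type*} [Nonempty J]
    (c : J → C) (a : J → A) (hwf : ∀ j, c j ≤ γ (a j)) :
    (sInf (hyperSum (fun j => {x : C | c j ≤ x ∧ x ≤ γ (a j)})),
      sSup (α '' hyperSum (fun j => {x : C | c j ≤ x ∧ x ≤ γ (a j)})))
    = (⨆ j, c j, ⨆ j, a j) := by
  have hmem : ∀ x : J → C, (∀ j, c j ≤ x j ∧ x j ≤ γ (a j)) →
      (⨆ j, x j) ∈ hyperSum (fun j => {x : C | c j ≤ x ∧ x ≤ γ (a j)}) :=
    fun x hx => ⟨x, hx, rfl⟩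
  have hc : (⨆ j, c j) ∈ hyperSum (fun j => {x : C | c j ≤ x ∧ x ≤ γ (a j)}) :=
    hmem c (fun j => ⟨le_rfl, hwf j⟩)
  have hγ : (⨆ j, γ (a j)) ∈ hyperSum (fun j => {x : C | c j ≤ x ∧ x ≤ γ (a j)}) :=
    hmem (fun j => γ (a j)) (fun j => ⟨hwf j, le_rfl⟩)
  have hαγ : α (⨆ j, γ (a j)) = ⨆ j, a j := by
    rw [iSup, hαsup, ← Set.range_comp]
    congr 1
    ext y
    simp [Function.comp, hins]
  refine Prod.ext ?_ ?_
  · apply le_antisymm (sInf_le hc)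
    apply le_sInf
    rintro y ⟨x, hx, rfl⟩
    exact iSup_mono fun j => (hx j).1
  · apply le_antisymm
    · apply sSup_le
      rintro y ⟨z, ⟨x, hx, rfl⟩, rfl⟩
      rw [← hαγ]
      have hmono : Monotone α := fun u v h => (hadj _ _).mpr (h.trans ((hadj _ _).mp le_rfl))
      exact hmono (iSup_mono fun j => (hx j).2)
    · rw [← hαγ]
      exact le_sSup ⟨_, hγ, rfl⟩
end

section
/- If C is a completely distributive complete lattice and α : C → A preserves arbitrary joins (part of a Galois insertion), then α_I : 𝒫(C) → C × A defined by α_I(X) = (⋀X, ⋁α(X)) is a complete homomorphism for the hyper sum: α_I(⊕_{j∈J} X_j) = ⊕_{j∈J}^I α_I(X_j), where ⊕^I on C × A is (c_j,a_j) ↦ (⋁_j c_j, ⋁_j a_j), for any family of nonempty subsets X_j ⊆ C. -/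
lemma hyperSum_eq_range {C : Type*} [CompleteLattice C] {ι : Type*} (X : ι → Set C) :
    hyperSum X = Set.range (fun g : (∀ i, X i) => ⨆ i, (g i : C)) := by
  ext c
  constructor
  · rintro ⟨x, hx, rfl⟩
    exact ⟨fun i => ⟨x i, hx i⟩, rfl⟩
  · rintro ⟨g, rfl⟩
    exact ⟨fun i => (g i : C), fun i => (g i).2, rfl⟩

/-- over a completely distributive lattice, the interval
abstraction `α_I` is a complete homomorphism for the hyper sum. -/
theorem interval_abstraction_complete_for_hyperSum
    {C : Type*} [CompletelyDistribLattice C]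
    {A : Type*} [CompleteLattice A]
    (α : C → A)
    (hαsup : ∀ S : Set C, α (sSup S) = sSup (α '' S))
    {J : Type*} (X : J → Set C) (hne : ∀ j, (X j).Nonempty) :
    (sInf (hyperSum X), sSup (α '' hyperSum X))
      = (⨆ j, sInf (X j), ⨆ j, sSup (α '' X j)) := by
  classical
  have hα : ∀ (x : J → C), α (⨆ j, x j) = ⨆ j, α (x j) := by
    intro x
    rw [← sSup_range, hαsup, ← Set.range_comp, sSup_range]
    rfl
  rw [Prod.mk.injEq]
  constructor
  · -- first component
    rw [hyperSum_eq_range, sInf_range]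
    have h : ∀ j, sInf (X j) = ⨅ x : X j, (x : C) := fun j => sInf_eq_iInf' (X j)
    simp_rw [h]
    exact (iSup_iInf_eq).symm
  · -- second component
    apply le_antisymm
    · apply sSup_le
      rintro a ⟨c, ⟨x, hx, rfl⟩, rfl⟩
      rw [hα]
      exact iSup_mono fun j => le_sSup ⟨x j, hx j, rfl⟩
    · apply iSup_le
      intro j
      apply sSup_le
      rintro a ⟨c, hc, rfl⟩
      set x : J → C := fun j' => if h : j' = j then c else (hne j').choose with hxdef
      have hxmem : ∀ j', x j' ∈ X j' := by
        intro j'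
        by_cases h : j' = j
        · subst h; simpa [hxdef] using hc
        · simpa [hxdef, h] using (hne j').choose_spec
      have hcx : α c ≤ α (⨆ j', x j') := by
        rw [hα]
        have : α c = α (x j) := by simp [hxdef]
        rw [this]
        exact le_iSup (fun j' => α (x j')) j
      exact hcx.trans (le_sSup ⟨_, ⟨x, hxmem, rfl⟩, rfl⟩)
end

section
/- Let D be a complete lattice with join basis B such that every nonempty subset of D is dense with respect to B, and let f : B → D be monotone with f(⊥) = ⊥ when ⊥ ∈ B. Then the join extension f⁺ : D → D is completely additive: f⁺(⊔X) = ⊔{f⁺(x) | x ∈ X} for every subset X ⊆ D (including X = ∅, using f⁺(⊥) = ⊥). -/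
/-- if every nonempty subset is dense and `f` is strict on `⊥`,
then the join extension is completely additive. -/
theorem joinExtension_completely_additive {D : Type*} [CompleteLattice D]
    (B : Set D) (hB : ∀ d : D, d = sSup {b | b ∈ B ∧ b ≤ d})
    (hbot : (⊥ : D) ∈ B)
    (hdense : ∀ X : Set D, X.Nonempty →
      ∀ b ∈ B, b ≤ sSup X → ∃ x ∈ X, b ≤ x)
    (f : D → D) (hf : ∀ b ∈ B, ∀ b' ∈ B, b ≤ b' → f b ≤ f b')
    (hstrict : f ⊥ = ⊥) :
    ∀ X : Set D,
      sSup (f '' {b | b ∈ B ∧ b ≤ sSup X})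
        = sSup ((fun x : D => sSup (f '' {b | b ∈ B ∧ b ≤ x})) '' X) := by
  intro X
  rcases X.eq_empty_or_nonempty with rfl | hne
  · have h1 : {b | b ∈ B ∧ b ≤ sSup (∅ : Set D)} = {⊥} := by
      ext b
      simp only [Set.mem_setOf_eq, sSup_empty, le_bot_iff, Set.mem_singleton_iff]
      constructor
      · rintro ⟨_, rfl⟩; rfl
      · rintro rfl; exact ⟨hbot, rfl⟩
    rw [h1, Set.image_singleton, hstrict]
    simp
  · apply le_antisymm
    · apply sSup_le
      rintro y ⟨b, ⟨hbB, hble⟩, rfl⟩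
      obtain ⟨x, hxX, hbx⟩ := hdense X hne b hbB hble
      calc f b ≤ sSup (f '' {b | b ∈ B ∧ b ≤ x}) :=
            le_sSup ⟨b, ⟨hbB, hbx⟩, rfl⟩
        _ ≤ sSup ((fun x : D => sSup (f '' {b | b ∈ B ∧ b ≤ x})) '' X) := le_sSup ⟨x, hxX, rfl⟩
    · apply sSup_le
      rintro y ⟨x, hxX, rfl⟩
      apply sSup_le
      rintro z ⟨b, ⟨hbB, hble⟩, rfl⟩
      exact le_sSup ⟨b, ⟨hbB, hble.trans (le_sSup hxX)⟩, rfl⟩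
end
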